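/- arXiv:1309.7756 — 2 statements merged into one kernel-verified Lean document; each statement's English description precedes it below -/
import Mathlib

section
/- Eigenfunction of the linearized operator with eigenvalue 1: For every d ∈ ℝ^N with |d| < 1, the function f(y) = (1−|d|²)^{p/(p−1)} (1+d·y)^{−(p+1)/(p−1)} satisfies, for every y ∈ B, the identity 𝓛f(y) + ψ(d,y) f(y) − ((p+3)/(p−1)) f(y) − 2 y·∇f(y) = f(y). (Equivalently, the pair F₀(d) = (f, f) is an eigenfunction of the linearized operator L_d(q₁,q₂) = (q₂, 𝓛q₁ + ψ(d,·)q₁ − ((p+3)/(p−1))q₂ − 2y·∇q₂) with eigenvalue λ = 1.) -/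
/-! The function `f` is a constant times a power `G ^ α` of the affine function
`G y = 1 + ⟪d, y⟫`, with `α = -(p + 1) / (p - 1)`. Its derivatives are therefore ridge functions,
`Df = c α G ^ (α - 1) ⟪d, ·⟫` and `D²f = c α (α - 1) G ^ (α - 2) ⟪d, ·⟫ ⟪d, ·⟫`, so every term
of the identity is `c G ^ α` times a rational function of `s = ⟪d, y⟫` and `‖d‖ ^ 2`; the identity
then follows by clearing denominators, which is legitimate because `|d| < 1` and `|y| < 1`
force `G y > 0`. -/

open MeasureTheory Metric
open scoped RealInnerProductSpace

noncomputable section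

/-- The degenerate elliptic operator 𝓛 in expanded form:
`𝓛w(y) = Δw(y) − Σ_{i,j} y_i y_j ∂²_{ij}w(y) − (2(p+1)/(p−1)) y·∇w(y)`. -/
def calL (N : ℕ) (p : ℝ) (w : EuclideanSpace ℝ (Fin N) → ℝ)
    (y : EuclideanSpace ℝ (Fin N)) : ℝ :=
  (∑ i : Fin N, fderiv ℝ (fun z => fderiv ℝ w z (EuclideanSpace.single i 1)) y
      (EuclideanSpace.single i 1))
    - fderiv ℝ (fun z => fderiv ℝ w z y) y y
    - (2 * (p + 1) / (p - 1)) * fderiv ℝ w y y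

/-- The potential `ψ(d,y)`. -/
def psiFun (N : ℕ) (p : ℝ) (d y : EuclideanSpace ℝ (Fin N)) : ℝ :=
  2 * (p + 1) / (p - 1) ^ 2 * (p * (1 - ‖d‖ ^ 2) / (1 + ⟪d, y⟫) ^ 2 - 1)

section InnerRpow

variable {E : Type*} [NormedAddCommGroup E] [InnerProductSpace ℝ E] {d z : E} (c α : ℝ)

theorem one_add_inner_pos {y : E} (hd : ‖d‖ < 1) (hy : ‖y‖ < 1) : 0 < 1 + ⟪d, y⟫ := by
  have hdy : ‖d‖ * ‖y‖ < 1 := by nlinarith [norm_nonneg d, norm_nonneg y]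
  linarith [neg_abs_le ⟪d, y⟫, abs_real_inner_le_norm d y]

theorem hasFDerivAt_const_mul_one_add_inner_rpow (hz : 1 + ⟪d, z⟫ ≠ 0) :
    HasFDerivAt (fun y => c * (1 + ⟪d, y⟫) ^ α)
      ((c * α * (1 + ⟪d, z⟫) ^ (α - 1)) • innerSL ℝ d) z := by
  have hlin : HasFDerivAt (fun y : E => 1 + ⟪d, y⟫) (innerSL ℝ d) z := by
    simpa using ((innerSL ℝ d).hasFDerivAt (x := z)).const_add 1
  simpa [smul_smul, mul_assoc] using ((hlin.rpow_const (Or.inl hz)).const_mul c)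

theorem fderiv_const_mul_one_add_inner_rpow_apply (hz : 1 + ⟪d, z⟫ ≠ 0) (v : E) :
    fderiv ℝ (fun y => c * (1 + ⟪d, y⟫) ^ α) z v = c * α * (1 + ⟪d, z⟫) ^ (α - 1) * ⟪d, v⟫ := by
  simp [(hasFDerivAt_const_mul_one_add_inner_rpow c α hz).fderiv]

theorem fderiv_fderiv_const_mul_one_add_inner_rpow_apply (hz : 1 + ⟪d, z⟫ ≠ 0) (v w : E) :
    fderiv ℝ (fun y => fderiv ℝ (fun y => c * (1 + ⟪d, y⟫) ^ α) y v) z w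
      = c * α * (α - 1) * (1 + ⟪d, z⟫) ^ (α - 2) * (⟪d, v⟫ * ⟪d, w⟫) := by
  have hnear : ∀ᶠ y in nhds z, 1 + ⟪d, y⟫ ≠ 0 :=
    (continuous_const.add (continuous_const.inner continuous_id)).continuousAt.eventually_ne hz
  have heq : (fun y => fderiv ℝ (fun y => c * (1 + ⟪d, y⟫) ^ α) y v)
      =ᶠ[nhds z] fun y => c * α * ⟪d, v⟫ * (1 + ⟪d, y⟫) ^ (α - 1) := by
    filter_upwards [hnear] with y hy
    rw [fderiv_const_mul_one_add_inner_rpow_apply c α hy]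
    ring
  rw [heq.fderiv_eq, fderiv_const_mul_one_add_inner_rpow_apply _ _ hz, sub_sub,
    one_add_one_eq_two]
  ring

end InnerRpow

theorem sum_inner_single_mul_inner_single {N : ℕ} (d : EuclideanSpace ℝ (Fin N)) :
    ∑ i : Fin N, ⟪d, EuclideanSpace.single i (1 : ℝ)⟫ * ⟪d, EuclideanSpace.single i (1 : ℝ)⟫
      = ‖d‖ ^ 2 := by
  simpa [real_inner_comm d] using (EuclideanSpace.basisFun (Fin N) ℝ).sum_inner_mul_inner d d

theorem calL_const_mul_one_add_inner_rpow {N : ℕ} (p c α : ℝ) {d y : EuclideanSpace ℝ (Fin N)}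
    (hy : 1 + ⟪d, y⟫ ≠ 0) :
    calL N p (fun z => c * (1 + ⟪d, z⟫) ^ α) y
      = c * α * (1 + ⟪d, y⟫) ^ α * ((α - 1) * (‖d‖ ^ 2 - ⟪d, y⟫ ^ 2) / (1 + ⟪d, y⟫) ^ 2
          - 2 * (p + 1) / (p - 1) * ⟪d, y⟫ / (1 + ⟪d, y⟫)) := by
  simp only [calL, fderiv_fderiv_const_mul_one_add_inner_rpow_apply _ _ hy,
    fderiv_const_mul_one_add_inner_rpow_apply _ _ hy]
  rw [← Finset.mul_sum, sum_inner_single_mul_inner_single, show α - 2 = α - 1 - 1 by ring,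
    Real.rpow_sub_one hy, Real.rpow_sub_one hy]
  field_simp

theorem stmt3_general (N : ℕ) (p : ℝ) (hp1 : 1 < p)
    (d : EuclideanSpace ℝ (Fin N)) (hd : ‖d‖ < 1)
    (f : EuclideanSpace ℝ (Fin N) → ℝ)
    (hf : f = fun y => (1 - ‖d‖ ^ 2) ^ (p / (p - 1)) *
      (1 + ⟪d, y⟫) ^ (-((p + 1) / (p - 1)))) :
    ∀ y ∈ ball (0 : EuclideanSpace ℝ (Fin N)) 1,
      calL N p f y + psiFun N p d y * f y - (p + 3) / (p - 1) * f y
          - 2 * fderiv ℝ f y y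
        = f y := by
  intro y hy
  have hG : 0 < 1 + ⟪d, y⟫ := one_add_inner_pos hd (by simpa using hy)
  subst hf
  rw [calL_const_mul_one_add_inner_rpow _ _ _ hG.ne',
    fderiv_const_mul_one_add_inner_rpow_apply _ _ hG.ne', Real.rpow_sub_one hG.ne', psiFun]
  have hp : p - 1 ≠ 0 := by linarith
  field_simp
  ring

/-- Eigenfunction of the linearized operator with eigenvalue 1. -/
theorem stmt3 (N : ℕ) (p : ℝ) (hN : 1 ≤ N) (hp1 : 1 < p)
    (hpc : 2 ≤ N → p < 1 + 4 / ((N : ℝ) - 1))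
    (d : EuclideanSpace ℝ (Fin N)) (hd : ‖d‖ < 1)
    (f : EuclideanSpace ℝ (Fin N) → ℝ)
    (hf : f = fun y => (1 - ‖d‖ ^ 2) ^ (p / (p - 1)) *
      (1 + ⟪d, y⟫) ^ (-((p + 1) / (p - 1)))) :
    ∀ y ∈ ball (0 : EuclideanSpace ℝ (Fin N)) 1,
      calL N p f y + psiFun N p d y * f y - (p + 3) / (p - 1) * f y
          - 2 * fderiv ℝ f y y
        = f y :=
  stmt3_general N p hp1 d hd f hf
end
end

section
/- Hardy inequality on the unit ball with weight (1−|y|²)^{−2}: Let N ≥ 2. For every C¹ function g : ℝ^N → ℝ with compact support contained in the open unit ball B, one has ∫_B g(y)²/(1−|y|²)² dy ≤ ∫_B |∇g(y)|² dy. -/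
open MeasureTheory Metric

/-!
Write `ρ y = 1 - ‖y‖²` and `φ = g² / ρ`. The field `y ↦ φ y • y` is C¹ with compact support
in the ball, so its divergence `∇φ(y)·y + N φ(y)` integrates to zero. On the ball
`∇φ(y)·y = 2 g (∇g·y) / ρ + 2 g² ‖y‖² / ρ²`, and by Cauchy–Schwarz and AM–GM
`2 |g| ‖∇g‖ ‖y‖ / ρ ≤ ‖∇g‖² + g² ‖y‖² / ρ²`; since `‖y‖² + N ρ ≥ 1` this gives the pointwise
bound `g² / ρ² ≤ ∇φ(y)·y + N φ(y) + ‖∇g‖²`, which integrates to the inequality.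
-/

theorem HasFDerivAt.fun_div {𝕜 E : Type*} [NontriviallyNormedField 𝕜] [NormedAddCommGroup E]
    [NormedSpace 𝕜 E] {c d : E → 𝕜} {c' d' : E →L[𝕜] 𝕜} {x : E}
    (hc : HasFDerivAt c c' x) (hd : HasFDerivAt d d' x) (hx : d x ≠ 0) :
    HasFDerivAt (fun y => c y / d y) ((d x ^ 2)⁻¹ • (d x • c' - c x • d')) x := by
  have h := hc.fun_mul ((hasFDerivAt_inv hx).comp x hd)
  simp only [Function.comp_def, ← div_eq_mul_inv] at h
  refine h.congr_fderiv ?_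
  ext v
  simp only [add_apply, smul_apply, sub_apply, ContinuousLinearMap.comp_apply,
    ContinuousLinearMap.toSpanSingleton_apply, smul_eq_mul]
  field_simp
  ring

theorem ContDiff.div_of_ne_zero_on_tsupport {𝕜 E : Type*} [NontriviallyNormedField 𝕜]
    [NormedAddCommGroup E] [NormedSpace 𝕜 E] {c d : E → 𝕜} {n : WithTop ℕ∞}
    (hc : ContDiff 𝕜 n c) (hd : ContDiff 𝕜 n d) (h : ∀ x ∈ tsupport c, d x ≠ 0) :
    ContDiff 𝕜 n (fun x => c x / d x) := by
  refine contDiff_iff_contDiffAt.2 fun x => ?_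
  by_cases hx : x ∈ tsupport c
  · exact hc.contDiffAt.div hd.contDiffAt (h x hx)
  · refine contDiffAt_const (c := (0 : 𝕜)).congr_of_eventuallyEq ?_
    filter_upwards [notMem_tsupport_iff_eventuallyEq.1 hx] with y hy
    simp [hy]

theorem integral_fderiv_apply_self_add_finrank_mul {E : Type*} [NormedAddCommGroup E]
    [NormedSpace ℝ E] [FiniteDimensional ℝ E] [MeasurableSpace E] [BorelSpace E]
    (μ : Measure E) [μ.IsAddHaarMeasure] {φ : E → ℝ} (hφ : ContDiff ℝ 1 φ)
    (hcs : HasCompactSupport φ) :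
    ∫ x, (fderiv ℝ φ x x + Module.finrank ℝ E * φ x) ∂μ = 0 := by
  -- Expand `x` in a basis and integrate by parts against each coordinate functional.
  let b := Module.finBasis ℝ E
  let c i : E →L[ℝ] ℝ := LinearMap.toContinuousLinearMap (b.coord i)
  have hcb : ∀ i, c i (b i) = 1 := fun i => by simp [c]
  have hdecomp : ∀ x, fderiv ℝ φ x x = ∑ i, c i x * fderiv ℝ φ x (b i) := fun x =>
    calc fderiv ℝ φ x x = fderiv ℝ φ x (∑ i, b.repr x i • b i) := by rw [b.sum_repr]
      _ = ∑ i, c i x * fderiv ℝ φ x (b i) := by simp only [map_sum, map_smul, smul_eq_mul]; rfl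
  have hφi : Integrable φ μ := hφ.continuous.integrable_of_hasCompactSupport hcs
  have hint : ∀ i, Integrable (fun x => c i x * fderiv ℝ φ x (b i)) μ := fun i =>
    ((c i).continuous.mul ((hφ.continuous_fderiv one_ne_zero).clm_apply continuous_const)
      ).integrable_of_hasCompactSupport ((hcs.fderiv_apply (𝕜 := ℝ) (b i)).mul_left)
  have hibp : ∀ i, ∫ x, c i x * fderiv ℝ φ x (b i) ∂μ = -∫ x, φ x ∂μ := fun i => by
    rw [integral_mul_fderiv_eq_neg_fderiv_mul_of_integrable (by simpa [hcb] using hφi) (hint i)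
      (((c i).continuous.mul hφ.continuous).integrable_of_hasCompactSupport hcs.mul_left)
      (fun x _ => (c i).differentiableAt) (fun x _ => hφ.differentiable one_ne_zero x)]
    simp [hcb]
  simp_rw [hdecomp]
  rw [integral_add (integrable_finsetSum _ fun i _ => hint i) (hφi.const_mul _),
    integral_finsetSum _ fun i _ => hint i, integral_const_mul]
  simp [hibp]

theorem setIntegral_fderiv_apply_self_add_finrank_mul {E : Type*} [NormedAddCommGroup E]
    [NormedSpace ℝ E] [FiniteDimensional ℝ E] [MeasurableSpace E] [BorelSpace E]
    (μ : Measure E) [μ.IsAddHaarMeasure] {φ : E → ℝ} (hφ : ContDiff ℝ 1 φ)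
    (hcs : HasCompactSupport φ) {s : Set E} (hs : tsupport φ ⊆ s) :
    ∫ x in s, (fderiv ℝ φ x x + Module.finrank ℝ E * φ x) ∂μ = 0 := by
  rw [setIntegral_eq_integral_of_forall_compl_eq_zero fun x hx => ?_]
  · exact integral_fderiv_apply_self_add_finrank_mul μ hφ hcs
  · have hxφ : x ∉ tsupport φ := fun h => hx (hs h)
    simp [fderiv_of_notMem_tsupport ℝ hxφ, image_eq_zero_of_notMem_tsupport hxφ]

theorem sq_div_one_sub_sq_sq_le {a b n r N : ℝ} (hr : 0 ≤ r) (hr1 : r < 1) (hb : |b| ≤ n * r)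
    (hN : 1 ≤ N) :
    a ^ 2 / (1 - r ^ 2) ^ 2 ≤
      ((1 - r ^ 2) * (2 * a * b) + 2 * a ^ 2 * r ^ 2) / (1 - r ^ 2) ^ 2
        + N * (a ^ 2 / (1 - r ^ 2)) + n ^ 2 := by
  have hρ : 0 < 1 - r ^ 2 := by nlinarith
  have hab : -(|a| * (n * r)) ≤ a * b := by
    have := mul_le_mul_of_nonneg_left hb (abs_nonneg a)
    rw [← abs_mul] at this
    linarith [neg_abs_le (a * b)]
  have hNρ : (1 - r ^ 2) * a ^ 2 ≤ N * (1 - r ^ 2) * a ^ 2 := by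
    have := mul_le_mul_of_nonneg_right hN (mul_nonneg hρ.le (sq_nonneg a))
    linarith
  have hsum : ((1 - r ^ 2) * (2 * a * b) + 2 * a ^ 2 * r ^ 2) / (1 - r ^ 2) ^ 2
        + N * (a ^ 2 / (1 - r ^ 2)) + n ^ 2 =
      ((1 - r ^ 2) * (2 * a * b) + 2 * a ^ 2 * r ^ 2 + N * (1 - r ^ 2) * a ^ 2
        + n ^ 2 * (1 - r ^ 2) ^ 2) / (1 - r ^ 2) ^ 2 := by
    field_simp
  rw [hsum, div_le_div_iff_of_pos_right (by positivity)]
  nlinarith [sq_nonneg (|a| * r - n * (1 - r ^ 2)), sq_abs a]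

theorem fderiv_sq_div_one_sub_norm_sq_apply_self {F : Type*} [NormedAddCommGroup F]
    [InnerProductSpace ℝ F] {g : F → ℝ} {x : F} (hg : DifferentiableAt ℝ g x)
    (hx : 1 - ‖x‖ ^ 2 ≠ 0) :
    fderiv ℝ (fun y => g y ^ 2 / (1 - ‖y‖ ^ 2)) x x =
      ((1 - ‖x‖ ^ 2) * (2 * g x * fderiv ℝ g x x) + 2 * g x ^ 2 * ‖x‖ ^ 2) / (1 - ‖x‖ ^ 2) ^ 2 := by
  have hρ := (hasStrictFDerivAt_norm_sq x).hasFDerivAt.const_sub (1 : ℝ)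
  rw [((hg.hasFDerivAt.pow 2).fun_div hρ hx).fderiv]
  simp only [smul_apply, sub_apply, neg_apply, nsmul_eq_mul, Nat.cast_ofNat,
    innerSL_apply_apply, real_inner_self_eq_norm_sq, smul_eq_mul]
  field_simp
  ring

theorem sq_div_one_sub_norm_sq_sq_le {F : Type*} [NormedAddCommGroup F]
    [InnerProductSpace ℝ F] [CompleteSpace F] {g : F → ℝ} {x : F} {N : ℝ}
    (hg : DifferentiableAt ℝ g x) (hx : ‖x‖ < 1) (hN : 1 ≤ N) :
    g x ^ 2 / (1 - ‖x‖ ^ 2) ^ 2 ≤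
      fderiv ℝ (fun y => g y ^ 2 / (1 - ‖y‖ ^ 2)) x x + N * (g x ^ 2 / (1 - ‖x‖ ^ 2))
        + ‖gradient g x‖ ^ 2 := by
  have hb : |fderiv ℝ g x x| ≤ ‖gradient g x‖ * ‖x‖ := by
    rw [← InnerProductSpace.toDual_symm_apply]
    exact abs_real_inner_le_norm _ _
  have hρ : 1 - ‖x‖ ^ 2 ≠ 0 := by nlinarith [norm_nonneg x]
  rw [fderiv_sq_div_one_sub_norm_sq_apply_self hg hρ]
  exact sq_div_one_sub_sq_sq_le (norm_nonneg x) hx hb hN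

theorem contDiff_sq_div_one_sub_norm_sq_pow {F : Type*} [NormedAddCommGroup F]
    [InnerProductSpace ℝ F] {g : F → ℝ} {n : WithTop ℕ∞} (hg : ContDiff ℝ n g)
    (hsub : tsupport g ⊆ ball 0 1) (k : ℕ) :
    ContDiff ℝ n fun y => g y ^ 2 / (1 - ‖y‖ ^ 2) ^ k := by
  refine (hg.pow 2).div_of_ne_zero_on_tsupport ((contDiff_const.sub (contDiff_norm_sq ℝ)).pow k)
    fun x hx => pow_ne_zero k ?_
  have := mem_ball_zero_iff.1 (hsub (closure_mono (fun y hy => by simpa using hy) hx))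
  nlinarith [norm_nonneg x]

/-- Hardy inequality on the unit ball with weight `(1−|y|²)^{−2}`. -/
theorem stmt13 (N : ℕ) (hN : 2 ≤ N)
    (g : EuclideanSpace ℝ (Fin N) → ℝ)
    (hg : ContDiff ℝ 1 g)
    (hsupp : HasCompactSupport g)
    (hsub : tsupport g ⊆ ball (0 : EuclideanSpace ℝ (Fin N)) 1) :
    (∫ y in ball (0 : EuclideanSpace ℝ (Fin N)) 1, g y ^ 2 / (1 - ‖y‖ ^ 2) ^ 2)
      ≤ ∫ y in ball (0 : EuclideanSpace ℝ (Fin N)) 1, ‖gradient g y‖ ^ 2 := by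
  set B := ball (0 : EuclideanSpace ℝ (Fin N)) 1
  set φ := fun y => g y ^ 2 / (1 - ‖y‖ ^ 2)
  have hφ : ContDiff ℝ 1 φ := by simpa using contDiff_sq_div_one_sub_norm_sq_pow hg hsub 1
  have hφg : Function.support φ ⊆ Function.support g := fun x hx => by simp_all [φ]
  have hdiv : ∫ y in B, (fderiv ℝ φ y y + N * φ y) = 0 := by
    simpa using setIntegral_fderiv_apply_self_add_finrank_mul volume hφ
      (hsupp.mono' (hφg.trans (subset_tsupport g))) ((closure_mono hφg).trans hsub)
  have hintB : ∀ f : EuclideanSpace ℝ (Fin N) → ℝ, Continuous f → IntegrableOn f B := fun f hf =>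
    (hf.continuousOn.integrableOn_compact (isCompact_closedBall 0 1)).mono_set
      ball_subset_closedBall
  have hW := hintB _ (contDiff_sq_div_one_sub_norm_sq_pow hg hsub 2).continuous
  have hD := hintB (fun y => fderiv ℝ φ y y + N * φ y)
    (((hφ.continuous_fderiv one_ne_zero).clm_apply continuous_id).add
      (continuous_const.mul hφ.continuous))
  have hG := hintB (fun y => ‖gradient g y‖ ^ 2)
    (((InnerProductSpace.toDual ℝ _).symm.continuous.comp
      (hg.continuous_fderiv one_ne_zero)).norm.pow 2)
  calc ∫ y in B, g y ^ 2 / (1 - ‖y‖ ^ 2) ^ 2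
      ≤ ∫ y in B, ((fderiv ℝ φ y y + N * φ y) + ‖gradient g y‖ ^ 2) :=
        setIntegral_mono_on hW (hD.add hG) measurableSet_ball fun x hx =>
          sq_div_one_sub_norm_sq_sq_le (hg.differentiable one_ne_zero x) (mem_ball_zero_iff.1 hx)
            (by exact_mod_cast one_le_two.trans hN)
    _ = ∫ y in B, ‖gradient g y‖ ^ 2 := by rw [integral_add hD hG, hdiv, zero_add]
end
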